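/- For 0 < b < μ, σ > 0, and a natural number n, ∫₀^b u^n exp(−(u−μ)²/(2σ²)) du = Σ_{k=0}^{n} C(n,k) μ^(n−k) σ^(k+1) 2^((k−1)/2) (−1)^k [ γ((k+1)/2, μ²/(2σ²)) − γ((k+1)/2, (b−μ)²/(2σ²)) ]. -/

import Mathlib

/-!
Substituting `x = μ - u` turns the integral into `∫_{μ-b}^{μ} (μ - x)ⁿ e^{-x²/(2σ²)} dx`.
Expanding `(μ - x)ⁿ` binomially leaves the centred moments `∫ xᵏ e^{-x²/(2σ²)} dx` over an
interval of positive reals, and there `t = x²/(2σ²)` turns each of them into a difference of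
lower incomplete gamma values; positivity keeps `t ^ ((k - 1) / 2)` continuous along the way.
-/

open MeasureTheory intervalIntegral Real Finset

/-- The lower incomplete gamma function `γ(s,x) = ∫₀ˣ t^(s−1) e^(−t) dt`. -/
noncomputable def lowerGamma (s x : ℝ) : ℝ :=
  ∫ t in (0:ℝ)..x, t ^ (s - 1) * Real.exp (-t)

lemma intervalIntegrable_rpow_sub_one_mul_exp_neg {s : ℝ} (hs : 0 < s) (a b : ℝ) :
    IntervalIntegrable (fun t : ℝ => t ^ (s - 1) * Real.exp (-t)) volume a b :=
  (intervalIntegrable_rpow' (by linarith)).mul_continuousOn (by fun_prop)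

lemma lowerGamma_sub_lowerGamma {s : ℝ} (hs : 0 < s) (x y : ℝ) :
    lowerGamma s y - lowerGamma s x = ∫ t in x..y, t ^ (s - 1) * Real.exp (-t) :=
  integral_interval_sub_left (intervalIntegrable_rpow_sub_one_mul_exp_neg hs _ _)
    (intervalIntegrable_rpow_sub_one_mul_exp_neg hs _ _)

lemma integral_sub_pow_mul {f : ℝ → ℝ} {a b : ℝ} (hf : IntervalIntegrable f volume a b)
    (μ : ℝ) (n : ℕ) :
    ∫ x in a..b, (μ - x) ^ n * f x
      = ∑ k ∈ range (n + 1), (n.choose k : ℝ) * μ ^ (n - k) * (-1) ^ k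
          * ∫ x in a..b, x ^ k * f x := by
  have binomial : ∀ x, (μ - x) ^ n * f x
      = ∑ k ∈ range (n + 1), (n.choose k : ℝ) * μ ^ (n - k) * (-1) ^ k * (x ^ k * f x) := by
    intro x
    rw [sub_eq_neg_add, add_pow, sum_mul]
    refine sum_congr rfl fun k _ => ?_
    rw [neg_pow]
    ring
  simp_rw [binomial]
  rw [integral_finsetSum fun k _ => (hf.continuousOn_mul (by fun_prop)).const_mul _]
  simp_rw [intervalIntegral.integral_const_mul]

-- `uᵏ du = σᵏ⁺¹ 2^((k-1)/2) t^((k+1)/2 - 1) dt` under `t = u²/(2σ²)`, `dt = u/σ² du`.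
lemma rpow_sq_div_mul_div_sq {σ u : ℝ} (hσ : 0 < σ) (hu : 0 < u) (k : ℕ) :
    σ ^ (k + 1) * 2 ^ (((k : ℝ) - 1) / 2)
        * ((u ^ 2 / (2 * σ ^ 2)) ^ (((k : ℝ) + 1) / 2 - 1) * (u / σ ^ 2)) = u ^ k := by
  have hv : 0 < u / σ := div_pos hu hσ
  have hpow : (u ^ 2 / (2 * σ ^ 2)) ^ (((k : ℝ) + 1) / 2 - 1)
      = (u / σ) ^ k / (u / σ) / 2 ^ (((k : ℝ) - 1) / 2) := by
    rw [show u ^ 2 / (2 * σ ^ 2) = (u / σ) ^ (2 : ℝ) / 2 by rw [rpow_two]; field_simp,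
      div_rpow (by positivity) zero_le_two, ← rpow_mul hv.le, ← rpow_natCast,
      ← rpow_sub_one hv.ne']
    congr 2 <;> ring
  rw [hpow, div_pow]
  field_simp
  ring

lemma integral_pow_mul_exp_neg_sq_div {σ a₁ a₂ : ℝ} (hσ : 0 < σ) (h₁ : 0 < a₁) (h₂ : 0 < a₂)
    (k : ℕ) :
    ∫ u in a₁..a₂, u ^ k * Real.exp (-u ^ 2 / (2 * σ ^ 2))
      = σ ^ (k + 1) * 2 ^ (((k : ℝ) - 1) / 2)
          * (lowerGamma (((k : ℝ) + 1) / 2) (a₂ ^ 2 / (2 * σ ^ 2))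
            - lowerGamma (((k : ℝ) + 1) / 2) (a₁ ^ 2 / (2 * σ ^ 2))) := by
  set s : ℝ := ((k : ℝ) + 1) / 2
  have hpos : ∀ u ∈ Set.uIcc a₁ a₂, 0 < u := fun u hu => (lt_inf_iff.2 ⟨h₁, h₂⟩).trans_le hu.1
  have hsubst : ∫ u in a₁..a₂, (fun t => t ^ (s - 1) * Real.exp (-t)) (u ^ 2 / (2 * σ ^ 2))
        * (u / σ ^ 2)
      = ∫ t in a₁ ^ 2 / (2 * σ ^ 2)..a₂ ^ 2 / (2 * σ ^ 2), t ^ (s - 1) * Real.exp (-t) := by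
    refine integral_comp_mul_deriv' (f := fun u => u ^ 2 / (2 * σ ^ 2)) (f' := fun u => u / σ ^ 2)
      (g := fun t => t ^ (s - 1) * Real.exp (-t)) (fun u _ => ?_) (by fun_prop) ?_
    · exact ((hasDerivAt_pow 2 u).div_const _).congr_deriv (by field_simp; norm_num)
    · rintro t ⟨u, hu, rfl⟩
      have : u ^ 2 / (2 * σ ^ 2) ≠ 0 := (div_pos (pow_pos (hpos u hu) 2) (by positivity)).ne'
      exact ((continuousAt_rpow_const _ _ (Or.inl this)).mul (by fun_prop)).continuousWithinAt
  rw [lowerGamma_sub_lowerGamma (by positivity), ← hsubst, ← intervalIntegral.integral_const_mul]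
  refine integral_congr fun u hu => ?_
  rw [neg_div, ← rpow_sq_div_mul_div_sq hσ (hpos u hu) k]
  ring

/-- For `0 < b < μ`, `σ > 0` and `n : ℕ`,
`∫₀^b uⁿ exp(−(u−μ)²/(2σ²)) du
  = Σ_{k=0}^{n} C(n,k) μ^(n−k) σ^(k+1) 2^((k−1)/2) (−1)^k
    [γ((k+1)/2, μ²/(2σ²)) − γ((k+1)/2, (b−μ)²/(2σ²))]`. -/
theorem gaussian_moment_mu_big (μ σ b : ℝ) (hb : 0 < b) (hμ : b < μ)
    (hσ : 0 < σ) (n : ℕ) :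
    ∫ u in (0:ℝ)..b, u ^ n * Real.exp (-(u - μ) ^ 2 / (2 * σ ^ 2))
      = ∑ k ∈ Finset.range (n + 1),
          (n.choose k : ℝ) * μ ^ (n - k) * σ ^ (k + 1)
            * (2 : ℝ) ^ (((k : ℝ) - 1) / 2) * (-1 : ℝ) ^ k
            * (lowerGamma (((k : ℝ) + 1) / 2) (μ ^ 2 / (2 * σ ^ 2))
               - lowerGamma (((k : ℝ) + 1) / 2) ((b - μ) ^ 2 / (2 * σ ^ 2))) := by
  have hreflect : ∫ u in (0:ℝ)..b, u ^ n * Real.exp (-(u - μ) ^ 2 / (2 * σ ^ 2))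
      = ∫ x in μ - b..μ, (μ - x) ^ n * Real.exp (-x ^ 2 / (2 * σ ^ 2)) := by
    have h := integral_comp_sub_left (a := 0) (b := b)
      (fun x => (μ - x) ^ n * Real.exp (-x ^ 2 / (2 * σ ^ 2))) μ
    simp only [sub_zero, sub_sub_cancel] at h
    simp only [← h, ← neg_sub μ, neg_sq]
  rw [hreflect, integral_sub_pow_mul (Continuous.intervalIntegrable (by fun_prop) _ _)]
  refine sum_congr rfl fun k _ => ?_
  rw [integral_pow_mul_exp_neg_sq_div hσ (sub_pos.2 hμ) (hb.trans hμ), ← neg_sub μ b, neg_sq]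
  ring
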